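/- Let x₀ ∈ ℝ^d, and for k = 0, …, K−1 let x_{k+1} = x_k − η g_k where g_k is a random vector with conditional mean ∇f(x_k) and conditional variance at most σ². If f is L-smooth and 4KηL ≤ 1, then for every k ≤ K, E‖x_k − x₀‖² ≤ 3.7 K η² (2K‖∇f(x₀)‖² + σ²). -/

import Mathlib

/-!
Write `eₖ = gₖ - ∇f(xₖ)` for the gradient noise, so that
`xₖ₊₁ - x₀ = (xₖ - x₀ - η ∇f(xₖ)) - η eₖ`. The first summand is `ℱₖ`-measurable and `eₖ` has
conditional mean zero, so the cross term vanishes in expectation (pull-out property) and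
`E‖xₖ₊₁ - x₀‖² = E‖xₖ - x₀ - η ∇f(xₖ)‖² + η² E‖eₖ‖²`.
Smoothness gives `‖∇f(y)‖ ≤ ‖∇f(x₀)‖ + L ‖y - x₀‖`; Young's inequality with weight `1/(2K)` and
`ηL ≤ 1/(4K)` then yield `Dₖ₊₁ ≤ (1 + 43/(32K)) Dₖ + (1 + 2K) η² ‖∇f(x₀)‖² + η² σ²` for
`Dₖ = E‖xₖ - x₀‖²`. Unrolling, the additive term is multiplied by at most
`∑_{j<K} (1 + 43/(32K))^j ≤ 32 K (e^{43/32} - 1) / 43 < 2.4 K`.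
-/

open MeasureTheory Finset
open scoped NNReal ENNReal

lemma add_sq_le_one_add_mul_sq_add {t : ℝ} (ht : 0 < t) (u v : ℝ) :
    (u + v) ^ 2 ≤ (1 + t) * u ^ 2 + (1 + t⁻¹) * v ^ 2 := by
  have hgap : (1 + t) * u ^ 2 + (1 + t⁻¹) * v ^ 2 - (u + v) ^ 2 = (t * u - v) ^ 2 / t := by
    field_simp
    ring
  have : 0 ≤ (t * u - v) ^ 2 / t := by positivity
  linarith

lemma one_add_inv_two_mul_mul_one_add_sq_le {c t : ℝ} (hc : 1 ≤ c) (ht : 0 ≤ t)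
    (hct : 4 * c * t ≤ 1) : (1 + (2 * c)⁻¹) * (1 + t) ^ 2 ≤ 1 + 43 / 32 / c := by
  set s := c⁻¹ with hs
  have hs0 : 0 < s := by positivity
  have hs1 : s ≤ 1 := inv_le_one_of_one_le₀ hc
  have hts : t ≤ s / 4 := by
    rw [hs, ← one_div, div_div, le_div_iff₀ (by positivity)]
    linarith
  have h1 : (1 + (2 * c)⁻¹) * (1 + t) ^ 2 ≤ (1 + s / 2) * (1 + s / 4) ^ 2 := by
    rw [mul_inv, ← hs]
    gcongr
    linarith
  have h2 : 43 / 32 / c = 43 / 32 * s := by rw [hs]; ring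
  -- `(1 + s/2) (1 + s/4)² = 1 + s + 5s²/16 + s³/32`, and `s², s³ ≤ s`
  rw [h2]
  nlinarith [mul_nonneg hs0.le (sub_nonneg.mpr hs1),
    mul_nonneg (mul_nonneg hs0.le hs0.le) (sub_nonneg.mpr hs1)]

lemma norm_sub_sub_smul_sq_le {E : Type*} [NormedAddCommGroup E] [NormedSpace ℝ E] {F : E → E}
    {L : ℝ≥0} (hF : LipschitzWith L F) {η c : ℝ} (hη : 0 ≤ η) (hc : 1 ≤ c)
    (hηL : 4 * c * (η * L) ≤ 1) (x₀ y : E) :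
    ‖y - x₀ - η • F y‖ ^ 2 ≤
      (1 + 43 / 32 / c) * ‖y - x₀‖ ^ 2 + (1 + 2 * c) * (η ^ 2 * ‖F x₀‖ ^ 2) := by
  have hFy : ‖F y‖ ≤ ‖F x₀‖ + L * ‖y - x₀‖ :=
    (norm_le_norm_add_norm_sub' (F y) (F x₀)).trans (by gcongr; exact hF.norm_sub_le y x₀)
  have hnorm : ‖y - x₀ - η • F y‖ ≤ (1 + η * L) * ‖y - x₀‖ + η * ‖F x₀‖ :=
    calc ‖y - x₀ - η • F y‖ ≤ ‖y - x₀‖ + η * ‖F y‖ := by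
          rw [← norm_smul_of_nonneg hη]
          exact norm_sub_le _ _
      _ ≤ ‖y - x₀‖ + η * (‖F x₀‖ + L * ‖y - x₀‖) := by gcongr
      _ = (1 + η * L) * ‖y - x₀‖ + η * ‖F x₀‖ := by ring
  have hc2 : 0 < 2 * c := by linarith
  calc ‖y - x₀ - η • F y‖ ^ 2 ≤ ((1 + η * L) * ‖y - x₀‖ + η * ‖F x₀‖) ^ 2 := by gcongr
    _ ≤ (1 + (2 * c)⁻¹) * ((1 + η * L) * ‖y - x₀‖) ^ 2 + (1 + (2 * c)⁻¹⁻¹) * (η * ‖F x₀‖) ^ 2 :=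
        add_sq_le_one_add_mul_sq_add (inv_pos.mpr hc2) _ _
    _ = (1 + (2 * c)⁻¹) * (1 + η * L) ^ 2 * ‖y - x₀‖ ^ 2 + (1 + 2 * c) * (η ^ 2 * ‖F x₀‖ ^ 2) := by
        rw [inv_inv]
        ring
    _ ≤ (1 + 43 / 32 / c) * ‖y - x₀‖ ^ 2 + (1 + 2 * c) * (η ^ 2 * ‖F x₀‖ ^ 2) := by
        gcongr
        exact one_add_inv_two_mul_mul_one_add_sq_le hc (by positivity) hηL

lemma le_geom_sum_mul_of_le_mul_add {D : ℕ → ℝ} {r B : ℝ} (hr : 0 ≤ r) (h0 : D 0 ≤ 0)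
    (hD : ∀ k, D (k + 1) ≤ r * D k + B) (k : ℕ) : D k ≤ (∑ j ∈ range k, r ^ j) * B := by
  induction k with
  | zero => simpa using h0
  | succ k ih =>
    calc D (k + 1) ≤ r * D k + B := hD k
      _ ≤ r * ((∑ j ∈ range k, r ^ j) * B) + B := by gcongr
      _ = (∑ j ∈ range (k + 1), r ^ j) * B := by rw [geom_sum_succ]; ring

lemma geom_sum_one_add_div_le {a : ℝ} (ha : 0 < a) {n k : ℕ} (hk : k ≤ n) :
    ∑ j ∈ range k, (1 + a / n) ^ j ≤ n * (Real.exp a - 1) / a := by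
  rcases Nat.eq_zero_or_pos n with rfl | hn
  · simp [Nat.le_zero.mp hk]
  have hn' : (0 : ℝ) < n := Nat.cast_pos.mpr hn
  have hr : 1 ≤ 1 + a / n := le_add_of_nonneg_right (by positivity)
  have hpow : (1 + a / n) ^ k ≤ Real.exp a :=
    calc (1 + a / n) ^ k ≤ (1 + a / n) ^ n := pow_le_pow_right₀ hr hk
      _ ≤ Real.exp a := by
        simpa [neg_div] using Real.one_sub_div_pow_le_exp_neg (n := n) (t := -a) (by linarith)
  rw [geom_sum_eq (lt_add_of_pos_right 1 (by positivity)).ne' k, add_sub_cancel_left,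
    div_div_eq_mul_div, mul_comm (n : ℝ)]
  gcongr

lemma exp_forty_three_div_thirty_two_le : Real.exp (43 / 32) ≤ 4.15 := by
  have h1 : Real.exp (11 / 32) ≤ 32 / 21 := by
    have := Real.exp_bound_div_one_sub_of_interval (x := 11 / 32) (by norm_num) (by norm_num)
    norm_num at this ⊢
    exact this
  have h2 := Real.exp_one_lt_d9
  have : Real.exp (43 / 32) = Real.exp 1 * Real.exp (11 / 32) := by
    rw [← Real.exp_add]; norm_num
  rw [this]
  nlinarith [Real.exp_pos 1, Real.exp_pos (11 / 32)]

theorem LipschitzWith.memLp_comp {α E F : Type*} [MeasurableSpace α] {μ : Measure α}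
    [IsFiniteMeasure μ] [NormedAddCommGroup E] [NormedAddCommGroup F] {K : ℝ≥0} {g : E → F}
    (hg : LipschitzWith K g) {p : ℝ≥0∞} {f : α → E} (hf : MemLp f p μ) : MemLp (g ∘ f) p μ := by
  have h := (hg.sub (LipschitzWith.const (g 0))).comp_memLp (by simp) hf
  convert h.add (memLp_const (g 0)) using 1
  ext
  simp

theorem integral_norm_sub_sub_smul_sq_le {Ω E : Type*} [MeasurableSpace Ω] {μ : Measure Ω}
    [IsProbabilityMeasure μ] [NormedAddCommGroup E] [NormedSpace ℝ E] {F : E → E} {L : ℝ≥0}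
    (hF : LipschitzWith L F) {η c : ℝ} (hη : 0 ≤ η) (hc : 1 ≤ c) (hηL : 4 * c * (η * L) ≤ 1)
    {X : Ω → E} (hX2 : MemLp X 2 μ) (x₀ : E) :
    ∫ ω, ‖X ω - x₀ - η • F (X ω)‖ ^ 2 ∂μ ≤
      (1 + 43 / 32 / c) * ∫ ω, ‖X ω - x₀‖ ^ 2 ∂μ + (1 + 2 * c) * (η ^ 2 * ‖F x₀‖ ^ 2) := by
  have hY2 : MemLp (fun ω => X ω - x₀) 2 μ := hX2.sub (memLp_const x₀)
  have hA2 : MemLp (fun ω => X ω - x₀ - η • F (X ω)) 2 μ :=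
    hY2.sub ((hF.memLp_comp hX2).const_smul η)
  have hY2' := ((memLp_two_iff_integrable_sq_norm hY2.1).mp hY2).const_mul (1 + 43 / 32 / c)
  calc ∫ ω, ‖X ω - x₀ - η • F (X ω)‖ ^ 2 ∂μ
      ≤ ∫ ω, ((1 + 43 / 32 / c) * ‖X ω - x₀‖ ^ 2 + (1 + 2 * c) * (η ^ 2 * ‖F x₀‖ ^ 2)) ∂μ :=
        integral_mono ((memLp_two_iff_integrable_sq_norm hA2.1).mp hA2)
          (hY2'.add (integrable_const _)) fun ω => norm_sub_sub_smul_sq_le hF hη hc hηL x₀ (X ω)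
    _ = (1 + 43 / 32 / c) * ∫ ω, ‖X ω - x₀‖ ^ 2 ∂μ + (1 + 2 * c) * (η ^ 2 * ‖F x₀‖ ^ 2) := by
        rw [integral_add hY2' (integrable_const _), integral_const_mul, integral_const]
        simp

section Stochastic

variable {Ω E : Type*} {m m0 : MeasurableSpace Ω} {μ : Measure Ω}
  [NormedAddCommGroup E] [InnerProductSpace ℝ E]

theorem MeasureTheory.MemLp.integrable_inner {f g : Ω → E} (hf : MemLp f 2 μ) (hg : MemLp g 2 μ) :
    Integrable (fun ω => inner ℝ (f ω) (g ω)) μ :=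
  (L2.integrable_inner (𝕜 := ℝ) (hf.toLp f) (hg.toLp g)).congr <| by
    filter_upwards [hf.coeFn_toLp, hg.coeFn_toLp] with ω hfω hgω
    rw [hfω, hgω]

theorem integral_le_of_condExp_le [IsProbabilityMeasure μ] (hm : m ≤ m0) {φ : Ω → ℝ} {C : ℝ}
    (h : ∀ᵐ ω ∂μ, μ[φ | m] ω ≤ C) : ∫ ω, φ ω ∂μ ≤ C := by
  rw [← integral_condExp hm]
  simpa using integral_mono_ae integrable_condExp (integrable_const C) h

theorem integral_inner_eq_zero_of_condExp_eq_zero [CompleteSpace E] [IsFiniteMeasure μ]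
    (hm : m ≤ m0) {A e : Ω → E} (hA : StronglyMeasurable[m] A) (hA2 : MemLp A 2 μ)
    (he2 : MemLp e 2 μ) (he : μ[e | m] =ᵐ[μ] 0) : ∫ ω, inner ℝ (A ω) (e ω) ∂μ = 0 := by
  rw [← integral_condExp hm]
  have hpull := condExp_bilin_of_stronglyMeasurable_left (innerSL ℝ) hA
    (hA2.integrable_inner he2) (he2.integrable one_le_two)
  refine (integral_congr_ae (hpull.trans ?_)).trans (integral_zero Ω ℝ)
  filter_upwards [he] with ω hω
  simp [hω]

theorem integral_norm_sub_smul_sq_of_condExp_eq_zero [CompleteSpace E] [IsFiniteMeasure μ]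
    (hm : m ≤ m0) {A e : Ω → E} (hA : StronglyMeasurable[m] A) (hA2 : MemLp A 2 μ)
    (he2 : MemLp e 2 μ) (he : μ[e | m] =ᵐ[μ] 0) (η : ℝ) :
    ∫ ω, ‖A ω - η • e ω‖ ^ 2 ∂μ = ∫ ω, ‖A ω‖ ^ 2 ∂μ + η ^ 2 * ∫ ω, ‖e ω‖ ^ 2 ∂μ := by
  have hA2' := (memLp_two_iff_integrable_sq_norm hA2.1).mp hA2
  have he2' := (memLp_two_iff_integrable_sq_norm he2.1).mp he2
  have hcross := (hA2.integrable_inner he2).const_mul (2 * η)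
  have hexpand : ∀ ω, ‖A ω - η • e ω‖ ^ 2
      = ‖A ω‖ ^ 2 - 2 * η * inner ℝ (A ω) (e ω) + η ^ 2 * ‖e ω‖ ^ 2 := by
    intro ω
    rw [norm_sub_sq_real, real_inner_smul_right, norm_smul, mul_pow, Real.norm_eq_abs, sq_abs]
    ring
  have hfirst : Integrable (fun ω => ‖A ω‖ ^ 2 - 2 * η * inner ℝ (A ω) (e ω)) μ :=
    hA2'.sub hcross
  simp_rw [hexpand]
  rw [integral_add hfirst (he2'.const_mul _), integral_sub hA2' hcross,
    integral_const_mul, integral_const_mul,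
    integral_inner_eq_zero_of_condExp_eq_zero hm hA hA2 he2 he]
  ring

theorem integral_norm_sgd_step_sub_sq_le [CompleteSpace E] [IsProbabilityMeasure μ]
    (hm : m ≤ m0) {F : E → E} {L : ℝ≥0} (hF : LipschitzWith L F) {η c σ : ℝ} (hη : 0 ≤ η)
    (hc : 1 ≤ c) (hηL : 4 * c * (η * L) ≤ 1) {X G : Ω → E} (hX : StronglyMeasurable[m] X)
    (hX2 : MemLp X 2 μ) (hG2 : MemLp G 2 μ) (hmean : μ[G | m] =ᵐ[μ] fun ω => F (X ω))
    (hvar : ∀ᵐ ω ∂μ, μ[fun ω' => ‖G ω' - F (X ω')‖ ^ 2 | m] ω ≤ σ ^ 2) (x₀ : E) :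
    ∫ ω, ‖X ω - η • G ω - x₀‖ ^ 2 ∂μ ≤ (1 + 43 / 32 / c) * ∫ ω, ‖X ω - x₀‖ ^ 2 ∂μ
      + ((1 + 2 * c) * (η ^ 2 * ‖F x₀‖ ^ 2) + η ^ 2 * σ ^ 2) := by
  have hFX : StronglyMeasurable[m] fun ω => F (X ω) := hF.continuous.comp_stronglyMeasurable hX
  have hFX2 : MemLp (fun ω => F (X ω)) 2 μ := hF.memLp_comp hX2
  have hA : StronglyMeasurable[m] fun ω => X ω - x₀ - η • F (X ω) :=
    (hX.sub stronglyMeasurable_const).sub (hFX.const_smul η)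
  have hA2 : MemLp (fun ω => X ω - x₀ - η • F (X ω)) 2 μ :=
    (hX2.sub (memLp_const x₀)).sub (hFX2.const_smul η)
  have he2 : MemLp (fun ω => G ω - F (X ω)) 2 μ := hG2.sub hFX2
  have he : μ[fun ω => G ω - F (X ω) | m] =ᵐ[μ] 0 := by
    filter_upwards [condExp_sub (hG2.integrable one_le_two) (hFX2.integrable one_le_two) m, hmean]
      with ω hsub hω
    change μ[G - fun ω => F (X ω) | m] ω = 0
    rw [hsub, Pi.sub_apply, hω, condExp_of_stronglyMeasurable hm hFX (hFX2.integrable one_le_two)]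
    exact sub_self _
  have hsplit : ∀ ω, X ω - η • G ω - x₀ = (X ω - x₀ - η • F (X ω)) - η • (G ω - F (X ω)) := by
    intro ω
    module
  simp_rw [hsplit]
  rw [integral_norm_sub_smul_sq_of_condExp_eq_zero hm hA hA2 he2 he]
  have hdrift := integral_norm_sub_sub_smul_sq_le hF hη hc hηL hX2 x₀
  have hnoise := integral_le_of_condExp_le hm hvar
  nlinarith [sq_nonneg η]

theorem integral_norm_sgd_sub_sq_le [CompleteSpace E] [IsProbabilityMeasure μ]
    {ℱ : ℕ → MeasurableSpace Ω} (hle : ∀ k, ℱ k ≤ m0) {F : E → E} {L : ℝ≥0}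
    (hF : LipschitzWith L F) {η σ : ℝ} (hη : 0 ≤ η) {K : ℕ} (hK : 0 < K)
    (hηL : 4 * (K : ℝ) * (η * L) ≤ 1) {x₀ : E} {x G : ℕ → Ω → E} (hx0 : ∀ ω, x 0 ω = x₀)
    (hstep : ∀ k ω, x (k + 1) ω = x k ω - η • G k ω)
    (hadapted : ∀ k, StronglyMeasurable[ℱ k] (x k)) (hG2 : ∀ k, MemLp (G k) 2 μ)
    (hmean : ∀ k, μ[G k | ℱ k] =ᵐ[μ] fun ω => F (x k ω))
    (hvar : ∀ k, ∀ᵐ ω ∂μ, μ[fun ω' => ‖G k ω' - F (x k ω')‖ ^ 2 | ℱ k] ω ≤ σ ^ 2)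
    {k : ℕ} (hk : k ≤ K) :
    ∫ ω, ‖x k ω - x₀‖ ^ 2 ∂μ ≤
      2.4 * K * ((1 + 2 * K) * (η ^ 2 * ‖F x₀‖ ^ 2) + η ^ 2 * σ ^ 2) := by
  have hc : (1 : ℝ) ≤ K := Nat.one_le_cast.mpr hK
  have hx2 : ∀ j, MemLp (x j) 2 μ := by
    intro j
    induction j with
    | zero =>
      rw [show x 0 = fun _ => x₀ from funext hx0]
      exact memLp_const x₀
    | succ j ih =>
      rw [show x (j + 1) = x j - η • G j from funext (hstep j)]
      exact ih.sub ((hG2 j).const_smul η)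
  have hrec : ∀ j, ∫ ω, ‖x (j + 1) ω - x₀‖ ^ 2 ∂μ ≤
      (1 + 43 / 32 / K) * ∫ ω, ‖x j ω - x₀‖ ^ 2 ∂μ
        + ((1 + 2 * K) * (η ^ 2 * ‖F x₀‖ ^ 2) + η ^ 2 * σ ^ 2) := by
    intro j
    simp only [hstep]
    exact integral_norm_sgd_step_sub_sq_le (hle j) hF hη hc hηL (hadapted j) (hx2 j) (hG2 j)
      (hmean j) (hvar j) x₀
  have hS : ∑ j ∈ range k, (1 + 43 / 32 / (K : ℝ)) ^ j ≤ 2.4 * K := by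
    refine (geom_sum_one_add_div_le (by norm_num) hk).trans ?_
    rw [div_le_iff₀ (by norm_num)]
    nlinarith [mul_le_mul_of_nonneg_left exp_forty_three_div_thirty_two_le (Nat.cast_nonneg K)]
  calc ∫ ω, ‖x k ω - x₀‖ ^ 2 ∂μ
      ≤ (∑ j ∈ range k, (1 + 43 / 32 / (K : ℝ)) ^ j)
        * ((1 + 2 * K) * (η ^ 2 * ‖F x₀‖ ^ 2) + η ^ 2 * σ ^ 2) :=
        le_geom_sum_mul_of_le_mul_add (D := fun j => ∫ ω, ‖x j ω - x₀‖ ^ 2 ∂μ)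
          (by positivity) (by simp [hx0]) hrec k
    _ ≤ 2.4 * K * ((1 + 2 * K) * (η ^ 2 * ‖F x₀‖ ^ 2) + η ^ 2 * σ ^ 2) := by gcongr

end Stochastic

theorem stmt_18_general {d : ℕ} {Ω : Type*} [m0 : MeasurableSpace Ω]
    (μ : Measure Ω) [IsProbabilityMeasure μ]
    (ℱ : ℕ → MeasurableSpace Ω) (hle : ∀ k, ℱ k ≤ m0)
    (f : EuclideanSpace ℝ (Fin d) → ℝ)
    (L η σ : ℝ) (K : ℕ)
    (hsmooth : ∀ u v, ‖gradient f u - gradient f v‖ ≤ L * ‖u - v‖)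
    (hη : 0 < η) (hstep : 4 * (K : ℝ) * η * L ≤ 1)
    (x₀ : EuclideanSpace ℝ (Fin d))
    (x g : ℕ → Ω → EuclideanSpace ℝ (Fin d))
    (hx0 : ∀ ω, x 0 ω = x₀)
    (hstep' : ∀ k ω, x (k + 1) ω = x k ω - η • g k ω)
    (hadapted : ∀ k, Measurable[ℱ k] (x k))
    (hgL2 : ∀ k, MemLp (g k) 2 μ)
    (hmean : ∀ k, μ[g k | ℱ k] =ᵐ[μ] fun ω => gradient f (x k ω))
    (hvar : ∀ k, ∀ᵐ ω ∂μ,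
      (μ[(fun ω' => ‖g k ω' - gradient f (x k ω')‖ ^ 2) | ℱ k]) ω ≤ σ ^ 2) :
    ∀ k ≤ K, ∫ ω, ‖x k ω - x₀‖ ^ 2 ∂μ ≤
      3.7 * (K : ℝ) * η ^ 2 * (2 * (K : ℝ) * ‖gradient f x₀‖ ^ 2 + σ ^ 2) := by
  intro k hk
  rcases Nat.eq_zero_or_pos K with rfl | hK
  · obtain rfl : k = 0 := Nat.le_zero.mp hk
    simp [hx0]
  have hF : LipschitzWith L.toNNReal (gradient f) :=
    LipschitzWith.of_dist_le' fun u v => by simpa only [dist_eq_norm] using hsmooth u v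
  have hηL : 4 * (K : ℝ) * (η * L.toNNReal) ≤ 1 := by
    rw [Real.coe_toNNReal']
    rcases le_total L 0 with hL | hL
    · simp [hL]
    · rw [max_eq_left hL]; linarith
  have hbound := integral_norm_sgd_sub_sq_le hle hF hη.le hK hηL hx0 hstep'
    (fun j => (hadapted j).stronglyMeasurable) hgL2 hmean hvar hk
  have hc : (1 : ℝ) ≤ K := Nat.one_le_cast.mpr hK
  have hηG : 0 ≤ K * (η ^ 2 * ‖gradient f x₀‖ ^ 2) := by positivity
  have hησ : 0 ≤ K * (η ^ 2 * σ ^ 2) := by positivity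
  nlinarith [mul_nonneg hηG (sub_nonneg.mpr hc)]

theorem stmt_18 {d : ℕ} {Ω : Type*} [m0 : MeasurableSpace Ω]
    (μ : Measure Ω) [IsProbabilityMeasure μ]
    (ℱ : ℕ → MeasurableSpace Ω) (hle : ∀ k, ℱ k ≤ m0)
    (f : EuclideanSpace ℝ (Fin d) → ℝ) (hdiff : Differentiable ℝ f)
    (L η σ : ℝ) (K : ℕ)
    (hsmooth : ∀ u v, ‖gradient f u - gradient f v‖ ≤ L * ‖u - v‖)
    (hη : 0 < η) (hL : 0 < L) (hstep : 4 * (K : ℝ) * η * L ≤ 1)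
    (x₀ : EuclideanSpace ℝ (Fin d))
    (x g : ℕ → Ω → EuclideanSpace ℝ (Fin d))
    (hx0 : ∀ ω, x 0 ω = x₀)
    (hstep' : ∀ k ω, x (k + 1) ω = x k ω - η • g k ω)
    (hadapted : ∀ k, Measurable[ℱ k] (x k))
    (hgmeas : ∀ k, Measurable (g k))
    (hgL2 : ∀ k, MemLp (g k) 2 μ)
    (hmean : ∀ k, μ[g k | ℱ k] =ᵐ[μ] fun ω => gradient f (x k ω))
    (hvar : ∀ k, ∀ᵐ ω ∂μ,
      (μ[(fun ω' => ‖g k ω' - gradient f (x k ω')‖ ^ 2) | ℱ k]) ω ≤ σ ^ 2) :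
    ∀ k ≤ K, ∫ ω, ‖x k ω - x₀‖ ^ 2 ∂μ ≤
      3.7 * (K : ℝ) * η ^ 2 * (2 * (K : ℝ) * ‖gradient f x₀‖ ^ 2 + σ ^ 2) :=
  stmt_18_general (m0 := m0) μ ℱ hle f L η σ K hsmooth hη hstep x₀ x g hx0 hstep' hadapted hgL2
    hmean hvar
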